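/- Let P = {x ∈ ℝⁿ : Ax = b, Bx ≤ d} be bounded and let x be a vertex of P. (a) If z ∈ ℝⁿ with ‖z‖₁ = 1 satisfies x + εz ∈ P for some ε > 0, and α > 0 is such that the augmentation αz at x is maximal (x + αz ∈ P but x + (α+ε)z ∉ P for all ε > 0), then α ≥ ω₁. (b) If z* ∈ ℝⁿ with ‖z*‖₁ = 1 and α* > 0 satisfy x + α*z* ∈ P, then α* ≤ M₁. -/

import Mathlib

noncomputable section

variable {n mA mB : ℕ}

/-- The real matrix obtained from an integer matrix. -/
def rmat {m k : Type*} (M : Matrix m k ℤ) : Matrix m k ℝ := M.map (fun z => (z : ℝ))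

/-- The real vector obtained from an integer vector. -/
def rvec {m : Type*} (v : m → ℤ) : m → ℝ := fun i => (v i : ℝ)

/-- The feasible region `P = {x : Ax = b, Bx ≤ d}`. -/
def Pset (A : Matrix (Fin mA) (Fin n) ℤ) (B : Matrix (Fin mB) (Fin n) ℤ)
    (b : Fin mA → ℤ) (d : Fin mB → ℤ) : Set (Fin n → ℝ) :=
  {x | (rmat A).mulVec x = rvec b ∧ ∀ i, (rmat B).mulVec x i ≤ (d i : ℝ)}

/-- `g` is a circuit of the system `Ax = b, Bx ≤ d`:  `g` is a nonzero kernel element of `A`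
whose image `Bg` is support-minimal among `{By : y ∈ ker A, y ≠ 0}`. -/
def IsCircuit (A : Matrix (Fin mA) (Fin n) ℤ) (B : Matrix (Fin mB) (Fin n) ℤ)
    (g : Fin n → ℝ) : Prop :=
  g ≠ 0 ∧ (rmat A).mulVec g = 0 ∧
    ∀ y : Fin n → ℝ, y ≠ 0 → (rmat A).mulVec y = 0 →
      ¬ ({i | (rmat B).mulVec y i ≠ 0} ⊂ {i | (rmat B).mulVec g i ≠ 0})

/-- The set `C(A,B)` of circuits, normalized to have coprime integer components. -/
def CAB (A : Matrix (Fin mA) (Fin n) ℤ) (B : Matrix (Fin mB) (Fin n) ℤ) :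
    Set (Fin n → ℝ) :=
  {g | IsCircuit A B g ∧ ∃ gz : Fin n → ℤ, (∀ i, g i = (gz i : ℝ)) ∧
        Finset.univ.gcd (fun i => (gz i).natAbs) = 1}

/-- `cᵀx` for an integer objective `c` and a real point `x`. -/
def dotIC (c : Fin n → ℤ) (x : Fin n → ℝ) : ℝ := ∑ i, (c i : ℝ) * x i

/-- The 1-norm of a vector. -/
def norm1 (x : Fin n → ℝ) : ℝ := ∑ i, |x i|

/-- `α g` is a maximal augmentation at `x` (within `P`). -/
def IsMaxAug (P : Set (Fin n → ℝ)) (x g : Fin n → ℝ) (α : ℝ) : Prop :=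
  0 < α ∧ x + α • g ∈ P ∧ ∀ ε : ℝ, 0 < ε → x + (α + ε) • g ∉ P

/-- `δ`: the largest absolute value of the determinant of an `n × n` submatrix of the
stacked matrix `(A; B)`. -/
def deltaMax (A : Matrix (Fin mA) (Fin n) ℤ) (B : Matrix (Fin mB) (Fin n) ℤ) : ℝ :=
  sSup {r : ℝ | ∃ f : Fin n → (Fin mA ⊕ Fin mB), Function.Injective f ∧
        r = |((((Matrix.fromRows A B).submatrix f id).det : ℤ) : ℝ)|}

/-- An (exposed) face of `P`: the set of minimizers over `P` of some linear functional. -/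
def IsFace (P F : Set (Fin n → ℝ)) : Prop :=
  ∃ w : Fin n → ℝ, F = {x ∈ P | ∀ y ∈ P, ∑ i, w i * x i ≤ ∑ i, w i * y i}

/-- The (affine) dimension of a subset of `ℝⁿ`. -/
def dimS (S : Set (Fin n → ℝ)) : ℕ := Module.finrank ℝ (affineSpan ℝ S).direction

/-- A facet of `P`: a face of dimension `dim P − 1`. -/
def IsFacet (P F : Set (Fin n → ℝ)) : Prop := IsFace P F ∧ dimS F + 1 = dimS P

/-- `ω₁`: the minimum 1-norm distance from a vertex of `P` to a point on a facet of `P`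
not containing that vertex. -/
def omega1 (P : Set (Fin n → ℝ)) : ℝ :=
  sInf {r : ℝ | ∃ v ∈ Set.extremePoints ℝ P, ∃ F : Set (Fin n → ℝ),
        IsFacet P F ∧ v ∉ F ∧ ∃ f ∈ F, r = norm1 (v - f)}

/-- `M₁`: the maximum 1-norm distance between two vertices of `P`. -/
def M1 (P : Set (Fin n → ℝ)) : ℝ :=
  sSup {r : ℝ | ∃ v₁ ∈ Set.extremePoints ℝ P, ∃ v₂ ∈ Set.extremePoints ℝ P,
        r = norm1 (v₁ - v₂)}

/-!
(a) At the end `y = x + αz` of a maximal step some inequality of the system is tight with a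
positive rate along `z`, so it is slack at `x`. In an irredundant subsystem some inequality is
tight at `y` and slack at `x` (otherwise `y + ε (y - x)` would stay feasible), and an irredundant
inequality that is not an implicit equality cuts out a facet. So `y` lies on a facet missing
the vertex `x`, and `α = ‖x - y‖₁ ≥ ω₁`.

(b) The sublevel sets of `p ↦ ‖v - p‖₁` are closed and convex, so by Krein–Milman the 1-norm
diameter of a compact convex set is attained at extreme points: `α* = ‖x - (x + α* z*)‖₁ ≤ M₁`.
-/

open Filter Topology Matrix

lemma norm1_nonneg (v : Fin n → ℝ) : 0 ≤ norm1 v :=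
  Finset.sum_nonneg fun _ _ => abs_nonneg _

lemma norm1_smul (t : ℝ) (v : Fin n → ℝ) : norm1 (t • v) = |t| * norm1 v := by
  simp only [norm1, Pi.smul_apply, smul_eq_mul, abs_mul, Finset.mul_sum]

lemma norm1_sub_add_smul (x z : Fin n → ℝ) (t : ℝ) :
    norm1 (x - (x + t • z)) = |t| * norm1 z := by
  rw [sub_add_cancel_left, ← neg_smul, norm1_smul, abs_neg]

lemma norm1_add_le (u v : Fin n → ℝ) : norm1 (u + v) ≤ norm1 u + norm1 v := by
  simp only [norm1, Pi.add_apply, ← Finset.sum_add_distrib]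
  exact Finset.sum_le_sum fun i _ => abs_add_le _ _

lemma norm1_sub_comm (u v : Fin n → ℝ) : norm1 (u - v) = norm1 (v - u) := by
  simp only [norm1, Pi.sub_apply, abs_sub_comm]

@[fun_prop]
lemma continuous_norm1 : Continuous (norm1 : (Fin n → ℝ) → ℝ) := by
  unfold norm1; fun_prop

lemma convex_setOf_norm1_sub_le (x : Fin n → ℝ) (r : ℝ) :
    Convex ℝ {p | norm1 (x - p) ≤ r} := by
  intro p hp q hq s t hs ht hst
  have hsplit : x - (s • p + t • q) = s • (x - p) + t • (x - q) := by
    linear_combination (norm := module) -(hst • x)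
  calc norm1 (x - (s • p + t • q)) ≤ s * norm1 (x - p) + t * norm1 (x - q) := by
        rw [hsplit]
        refine (norm1_add_le _ _).trans_eq ?_
        rw [norm1_smul, norm1_smul, abs_of_nonneg hs, abs_of_nonneg ht]
    _ ≤ s * r + t * r := by gcongr <;> assumption
    _ = r := by rw [← add_mul, hst, one_mul]

lemma isClosed_setOf_norm1_sub_le (x : Fin n → ℝ) (r : ℝ) :
    IsClosed {p | norm1 (x - p) ≤ r} :=
  isClosed_le (by fun_prop) continuous_const

lemma subset_of_extremePoints_subset {E : Type*} [AddCommGroup E] [Module ℝ E]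
    [TopologicalSpace E] [T2Space E] [IsTopologicalAddGroup E] [ContinuousSMul ℝ E]
    [LocallyConvexSpace ℝ E] {P C : Set E} (hP : IsCompact P) (hPconv : Convex ℝ P)
    (hC : Convex ℝ C) (hCclosed : IsClosed C) (hext : Set.extremePoints ℝ P ⊆ C) : P ⊆ C := by
  rw [← closure_convexHull_extremePoints hP hPconv]
  exact closure_minimal (convexHull_min hext hC) hCclosed

lemma norm1_sub_le_M1 {P : Set (Fin n → ℝ)} (hP : IsCompact P) (hPconv : Convex ℝ P)
    {x y : Fin n → ℝ} (hx : x ∈ P) (hy : y ∈ P) : norm1 (x - y) ≤ M1 P := by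
  have hbdd : BddAbove {r : ℝ | ∃ v₁ ∈ Set.extremePoints ℝ P, ∃ v₂ ∈ Set.extremePoints ℝ P,
      r = norm1 (v₁ - v₂)} := by
    refine ((hP.prod hP).bddAbove_image (f := fun v => norm1 (v.1 - v.2))
      (by fun_prop)).mono ?_
    rintro r ⟨v₁, hv₁, v₂, hv₂, rfl⟩
    exact ⟨(v₁, v₂), ⟨hv₁.1, hv₂.1⟩, rfl⟩
  have hext : ∀ v ∈ Set.extremePoints ℝ P, P ⊆ {p | norm1 (v - p) ≤ M1 P} := fun v hv =>
    subset_of_extremePoints_subset hP hPconv (convex_setOf_norm1_sub_le v _)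
      (isClosed_setOf_norm1_sub_le v _) fun w hw => le_csSup hbdd ⟨v, hv, w, hw, rfl⟩
  have hy' : P ⊆ {p | norm1 (y - p) ≤ M1 P} :=
    subset_of_extremePoints_subset hP hPconv (convex_setOf_norm1_sub_le y _)
      (isClosed_setOf_norm1_sub_le y _) fun v hv => by
        simpa only [Set.mem_ofPred_eq, norm1_sub_comm y] using hext v hv hy
  simpa only [Set.mem_ofPred_eq, norm1_sub_comm y] using hy' hx

lemma omega1_le_norm1_sub {P F : Set (Fin n → ℝ)} {v f : Fin n → ℝ}
    (hv : v ∈ Set.extremePoints ℝ P) (hF : IsFacet P F) (hvF : v ∉ F) (hf : f ∈ F) :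
    omega1 P ≤ norm1 (v - f) := by
  refine csInf_le ⟨0, ?_⟩ ⟨v, hv, F, hF, hvF, f, hf, rfl⟩
  rintro r ⟨-, -, -, -, -, f', -, rfl⟩
  exact norm1_nonneg _

lemma mem_vectorSpan_of_add_smul_mem {k E : Type*} [Field k] [AddCommGroup E] [Module k E]
    {S : Set E} {u v : E} {ε : k} (hu : u ∈ S) (huv : u + ε • v ∈ S) (hε : ε ≠ 0) :
    v ∈ vectorSpan k S := by
  have h := vsub_mem_vectorSpan k huv hu
  rwa [vsub_eq_sub, add_sub_cancel_left, Submodule.smul_mem_iff _ hε] at h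

lemma finrank_le_finrank_inf_ker_add_one {K V : Type*} [Field K] [AddCommGroup V] [Module K V]
    [FiniteDimensional K V] (W : Submodule K V) (f : V →ₗ[K] K) :
    Module.finrank K W ≤ Module.finrank K ↥(W ⊓ LinearMap.ker f) + 1 := by
  have hrank := LinearMap.finrank_range_add_finrank_ker (f ∘ₗ W.subtype)
  have hrange := Submodule.finrank_le (LinearMap.range (f ∘ₗ W.subtype))
  rw [Module.finrank_self] at hrange
  rw [LinearMap.ker_comp, ← Submodule.finrank_map_subtype_eq, Submodule.map_comap_subtype]
    at hrank
  omega

lemma exists_forall_lt_of_convexOn {ι E : Type*} [AddCommGroup E] [Module ℝ E]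
    {S : Set E} (hS : S.Nonempty) (s : Finset ι) {f : ι → E → ℝ} {c : ι → ℝ}
    (hf : ∀ i ∈ s, ConvexOn ℝ S (f i)) (hle : ∀ i ∈ s, ∀ p ∈ S, f i p ≤ c i)
    (hlt : ∀ i ∈ s, ∃ p ∈ S, f i p < c i) : ∃ p ∈ S, ∀ i ∈ s, f i p < c i := by
  classical
  induction s using Finset.induction_on with
  | empty => exact hS.imp fun p hp => ⟨hp, by simp⟩
  | insert j s hj ih =>
    simp only [Finset.forall_mem_insert] at hf hle hlt ⊢
    obtain ⟨p, hp, hps⟩ := ih hf.2 hle.2 hlt.2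
    obtain ⟨q, hq, hqj⟩ := hlt.1
    have hmid : ∀ i, ConvexOn ℝ S (f i) → f i p ≤ c i → f i q ≤ c i →
        (f i p < c i ∨ f i q < c i) → f i ((1 / 2 : ℝ) • p + (1 / 2 : ℝ) • q) < c i := by
      intro i hfi hpi hqi hlt
      have := hfi.2 hp hq (show (0 : ℝ) ≤ 1 / 2 by norm_num) (show (0 : ℝ) ≤ 1 / 2 by norm_num)
        (by norm_num)
      simp only [smul_eq_mul] at this
      rcases hlt with h | h <;> linarith
    refine ⟨_, hf.1.1 hp hq (by norm_num) (by norm_num) (by norm_num),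
      hmid j hf.1 (hle.1 p hp) (hle.1 q hq) (Or.inr hqj), fun i hi => ?_⟩
    exact hmid i (hf.2 i hi) (hle.2 i hi p hp) (hle.2 i hi q hq) (Or.inl (hps i hi))

lemma isFace_inter_hyperplane {P : Set (Fin n → ℝ)} {a : Fin n → ℝ} {r : ℝ}
    (hP : ∀ p ∈ P, a ⬝ᵥ p ≤ r) {y : Fin n → ℝ} (hy : y ∈ P) (hyr : a ⬝ᵥ y = r) :
    IsFace P {p ∈ P | a ⬝ᵥ p = r} := by
  refine ⟨-a, Set.ext fun p => ⟨fun ⟨hp, hpr⟩ => ⟨hp, fun q hq => ?_⟩, fun ⟨hp, hmin⟩ => ?_⟩⟩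
  · change -a ⬝ᵥ p ≤ -a ⬝ᵥ q
    rw [neg_dotProduct, neg_dotProduct, hpr]
    exact neg_le_neg (hP q hq)
  · refine ⟨hp, le_antisymm (hP p hp) ?_⟩
    have : -a ⬝ᵥ p ≤ -a ⬝ᵥ y := hmin y hy
    rw [neg_dotProduct, neg_dotProduct, hyr] at this
    exact neg_le_neg_iff.1 this

lemma vectorSpan_le_ker_dotProduct {S : Set (Fin n → ℝ)} {a : Fin n → ℝ} {r : ℝ}
    (hS : ∀ p ∈ S, a ⬝ᵥ p = r) : vectorSpan ℝ S ≤ LinearMap.ker (dotProductBilin ℝ ℝ a) := by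
  rw [vectorSpan_def, Submodule.span_le]
  rintro _ ⟨p, hp, q, hq, rfl⟩
  simp [dotProduct_sub, hS p hp, hS q hq]

lemma dimS_eq_finrank_vectorSpan (S : Set (Fin n → ℝ)) :
    dimS S = Module.finrank ℝ (vectorSpan ℝ S) := by
  rw [dimS, direction_affineSpan]

lemma dimS_lt_of_subset_hyperplane {S T : Set (Fin n → ℝ)} {a : Fin n → ℝ} {r : ℝ}
    (hST : S ⊆ T) (hS : ∀ p ∈ S, a ⬝ᵥ p = r) {s t : Fin n → ℝ} (hs : s ∈ S) (ht : t ∈ T)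
    (htr : a ⬝ᵥ t ≠ r) : dimS S < dimS T := by
  rw [dimS_eq_finrank_vectorSpan, dimS_eq_finrank_vectorSpan]
  refine Submodule.finrank_lt_finrank_of_lt (lt_of_le_of_ne (vectorSpan_mono ℝ hST) fun h => ?_)
  have hts : t -ᵥ s ∈ vectorSpan ℝ S := h ▸ vsub_mem_vectorSpan ℝ ht (hST hs)
  have := vectorSpan_le_ker_dotProduct hS hts
  simp only [LinearMap.mem_ker, dotProductBilin_apply_apply, vsub_eq_sub, dotProduct_sub,
    hS s hs, sub_eq_zero] at this
  exact htr this

def polyhedron {ι : Type*} (M : Matrix ι (Fin n) ℝ) (c : ι → ℝ) : Set (Fin n → ℝ) :=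
  {x | M *ᵥ x ≤ c}

lemma Pset_eq_polyhedron (A : Matrix (Fin mA) (Fin n) ℤ) (B : Matrix (Fin mB) (Fin n) ℤ)
    (b : Fin mA → ℤ) (d : Fin mB → ℤ) :
    Pset A B b d = polyhedron (Matrix.fromRows (Matrix.fromRows (rmat A) (-rmat A)) (rmat B))
      (Sum.elim (Sum.elim (rvec b) (-rvec b)) (rvec d)) := by
  ext x
  simp only [Pset, polyhedron, Set.mem_ofPred_eq, fromRows_mulVec, neg_mulVec, Pi.le_def,
    Sum.forall, Sum.elim_inl, Sum.elim_inr, Pi.neg_apply, neg_le_neg_iff, funext_iff,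
    ← forall_and, ← le_antisymm_iff]
  rfl

section Polyhedron

variable {ι : Type*} {M : Matrix ι (Fin n) ℝ} {c : ι → ℝ}

lemma isClosed_polyhedron : IsClosed (polyhedron M c) :=
  isClosed_le (by fun_prop) continuous_const

lemma convex_polyhedron : Convex ℝ (polyhedron M c) := by
  intro p hp q hq s t hs ht hst
  simp only [polyhedron, Set.mem_ofPred_eq, mulVec_add, mulVec_smul] at hp hq ⊢
  calc s • M *ᵥ p + t • M *ᵥ q ≤ s • c + t • c := by gcongr
    _ = c := by rw [← add_smul, hst, one_smul]

def IsImplicitEq (M : Matrix ι (Fin n) ℝ) (c : ι → ℝ) (i : ι) : Prop :=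
  ∀ p ∈ polyhedron M c, (M *ᵥ p) i = c i

lemma mulVec_add_smul_apply (u v : Fin n → ℝ) (t : ℝ) (i : ι) :
    (M *ᵥ (u + t • v)) i = (M *ᵥ u) i + t * (M *ᵥ v) i := by
  simp [mulVec_add, mulVec_smul]

lemma eventually_forall_mulVec_add_smul_le {s : Finset ι} {u v : Fin n → ℝ}
    (hu : ∀ i ∈ s, (M *ᵥ u) i ≤ c i) (hv : ∀ i ∈ s, (M *ᵥ u) i = c i → (M *ᵥ v) i ≤ 0) :
    ∀ᶠ ε in 𝓝[>] (0 : ℝ), ∀ i ∈ s, (M *ᵥ (u + ε • v)) i ≤ c i := by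
  rw [eventually_all_finset]
  intro i hi
  simp only [mulVec_add_smul_apply]
  rcases (hu i hi).lt_or_eq with hlt | heq
  · have hlim : Tendsto (fun ε : ℝ => (M *ᵥ u) i + ε * (M *ᵥ v) i) (𝓝[>] 0)
        (𝓝 ((M *ᵥ u) i)) :=
      tendsto_nhdsWithin_of_tendsto_nhds
        (by simpa using ((continuous_mul_const ((M *ᵥ v) i)).const_add ((M *ᵥ u) i)).tendsto 0)
    exact hlim.eventually_le_const hlt
  · filter_upwards [self_mem_nhdsWithin] with ε (hε : 0 < ε)
    nlinarith [hv i hi heq]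

section Fintype

variable [Fintype ι]

lemma exists_mem_polyhedron_forall_lt (hne : (polyhedron M c).Nonempty) :
    ∃ p ∈ polyhedron M c, ∀ i, ¬ IsImplicitEq M c i → (M *ᵥ p) i < c i := by
  classical
  obtain ⟨p, hp, hlt⟩ := exists_forall_lt_of_convexOn hne
    (Finset.univ.filter fun i => ¬ IsImplicitEq M c i) (f := fun i p => (M *ᵥ p) i)
    (fun i _ => (dotProductBilin ℝ ℝ (M.row i)).convexOn convex_polyhedron)
    (fun i _ p hp => hp i)
    (fun i hi => by
      obtain ⟨p, hp, hne⟩ := not_forall₂.1 (Finset.mem_filter.1 hi).2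
      exact ⟨p, hp, (hp i).lt_of_ne hne⟩)
  exact ⟨p, hp, fun i hi => hlt i (by simpa using hi)⟩

lemma exists_irredundant_subsystem :
    ∃ K : Finset ι, (∀ p, (∀ i ∈ K, (M *ᵥ p) i ≤ c i) → p ∈ polyhedron M c) ∧
      ∀ j ∈ K, ∃ q, (∀ i ∈ K, i ≠ j → (M *ᵥ q) i ≤ c i) ∧ c j < (M *ᵥ q) j := by
  classical
  obtain ⟨K, hK, hmin⟩ := exists_minimal_of_wellFoundedLT
    (fun K : Finset ι => ∀ p, (∀ i ∈ K, (M *ᵥ p) i ≤ c i) → p ∈ polyhedron M c)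
    ⟨Finset.univ, fun p hp i => hp i (Finset.mem_univ i)⟩
  refine ⟨K, hK, fun j hj => ?_⟩
  have hnot : ¬ ∀ p, (∀ i ∈ K.erase j, (M *ᵥ p) i ≤ c i) → p ∈ polyhedron M c :=
    fun h => Finset.notMem_erase j K (hmin h (Finset.erase_subset j K) hj)
  push Not at hnot
  obtain ⟨q, hqK, hqP⟩ := hnot
  refine ⟨q, fun i hi hij => hqK i (Finset.mem_erase.2 ⟨hij, hi⟩), ?_⟩
  by_contra! hqj
  exact hqP (hK q fun i hi => if hij : i = j then hij ▸ hqj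
    else hqK i (Finset.mem_erase.2 ⟨hij, hi⟩))

variable {K : Finset ι} {j : ι} {q x y : Fin n → ℝ}

lemma exists_mem_mulVec_eq_forall_lt
    (hK : ∀ p, (∀ i ∈ K, (M *ᵥ p) i ≤ c i) → p ∈ polyhedron M c)
    (hq : ∀ i ∈ K, i ≠ j → (M *ᵥ q) i ≤ c i) (hqj : c j < (M *ᵥ q) j)
    (hx : x ∈ polyhedron M c) (hxj : (M *ᵥ x) j < c j) :
    ∃ u ∈ polyhedron M c, (M *ᵥ u) j = c j ∧
      ∀ i ∈ K, i ≠ j → ¬ IsImplicitEq M c i → (M *ᵥ u) i < c i := by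
  obtain ⟨p, hp, hpstrict⟩ := exists_mem_polyhedron_forall_lt ⟨x, hx⟩
  have hpj : (M *ᵥ p) j < c j := hpstrict j fun h => hxj.ne (h x hx)
  -- `u` is the point where the segment from `p` to `q` crosses the hyperplane of row `j`
  set t := (c j - (M *ᵥ p) j) / ((M *ᵥ q) j - (M *ᵥ p) j)
  have hden : 0 < (M *ᵥ q) j - (M *ᵥ p) j := by linarith
  have ht0 : 0 < t := div_pos (by linarith) hden
  have ht1 : 0 < 1 - t := sub_pos.2 ((div_lt_one hden).2 (by linarith))
  have hMu : ∀ i, (M *ᵥ (p + t • (q - p))) i = (1 - t) * (M *ᵥ p) i + t * (M *ᵥ q) i := by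
    intro i
    rw [mulVec_add_smul_apply, mulVec_sub, Pi.sub_apply]
    ring
  have huj : (M *ᵥ (p + t • (q - p))) j = c j := by
    have hstep : t * ((M *ᵥ q) j - (M *ᵥ p) j) = c j - (M *ᵥ p) j := div_mul_cancel₀ _ hden.ne'
    rw [hMu]
    linarith
  have hule : ∀ i ∈ K, i ≠ j → (M *ᵥ (p + t • (q - p))) i ≤ c i := fun i hi hij => by
    rw [hMu]
    nlinarith [hp i, hq i hi hij]
  refine ⟨_, hK _ fun i hi => ?_, huj, fun i hi hij himp => ?_⟩
  · rcases eq_or_ne i j with rfl | hij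
    · exact huj.le
    · exact hule i hi hij
  · rw [hMu]
    nlinarith [hpstrict i himp, hq i hi hij]

lemma isFacet_setOf_mulVec_eq
    (hK : ∀ p, (∀ i ∈ K, (M *ᵥ p) i ≤ c i) → p ∈ polyhedron M c)
    (hq : ∀ i ∈ K, i ≠ j → (M *ᵥ q) i ≤ c i) (hqj : c j < (M *ᵥ q) j)
    (hx : x ∈ polyhedron M c) (hxj : (M *ᵥ x) j < c j)
    (hy : y ∈ polyhedron M c) (hyj : (M *ᵥ y) j = c j) :
    IsFacet (polyhedron M c) {p ∈ polyhedron M c | (M *ᵥ p) j = c j} := by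
  set P := polyhedron M c
  set F := {p ∈ P | (M *ᵥ p) j = c j}
  obtain ⟨u, huP, huj, hustrict⟩ := exists_mem_mulVec_eq_forall_lt hK hq hqj hx hxj
  set W := ⨅ i ∈ {i | IsImplicitEq M c i}, LinearMap.ker (dotProductBilin ℝ ℝ (M.row i))
  have hPW : vectorSpan ℝ P ≤ W := le_iInf₂ fun i hi => vectorSpan_le_ker_dotProduct hi
  -- directions in `W` keeping row `j` tight can be followed from `u` while staying in `F`
  have hWF : W ⊓ LinearMap.ker (dotProductBilin ℝ ℝ (M.row j)) ≤ vectorSpan ℝ F := by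
    intro v hv
    simp only [W, Submodule.mem_inf, Submodule.mem_iInf, LinearMap.mem_ker,
      dotProductBilin_apply_apply] at hv
    obtain ⟨hvW, hvj⟩ := hv
    have hdir : ∀ i ∈ K, (M *ᵥ u) i = c i → (M *ᵥ v) i ≤ 0 := fun i hi hui => by
      rcases eq_or_ne i j with rfl | hij
      · exact hvj.le
      · by_cases himp : IsImplicitEq M c i
        · exact (hvW i himp).le
        · exact absurd hui (hustrict i hi hij himp).ne
    obtain ⟨ε, hε, hε0⟩ :=
      ((eventually_forall_mulVec_add_smul_le (fun i _ => huP i) hdir).and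
        self_mem_nhdsWithin).exists
    refine mem_vectorSpan_of_add_smul_mem (S := F) ⟨huP, huj⟩ ⟨hK _ hε, ?_⟩ hε0.ne'
    rw [mulVec_add_smul_apply, huj]
    change c j + ε * (M.row j ⬝ᵥ v) = c j
    rw [hvj, mul_zero, add_zero]
  have hlt : dimS F < dimS P :=
    dimS_lt_of_subset_hyperplane (a := M.row j) (fun p hp => hp.1) (fun p hp => hp.2)
      (⟨hy, hyj⟩ : y ∈ F) hx hxj.ne
  refine ⟨isFace_inter_hyperplane (a := M.row j) (fun p hp => hp j) hy hyj, le_antisymm hlt ?_⟩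
  have hle := finrank_le_finrank_inf_ker_add_one W (dotProductBilin ℝ ℝ (M.row j))
  have hPW' := Submodule.finrank_mono hPW
  have hWF' := Submodule.finrank_mono hWF
  rw [dimS_eq_finrank_vectorSpan, dimS_eq_finrank_vectorSpan]
  omega

lemma exists_isFacet_mem_not_mem {i : ι} (hx : x ∈ polyhedron M c) (hy : y ∈ polyhedron M c)
    (hyi : (M *ᵥ y) i = c i) (hxi : (M *ᵥ x) i < c i) :
    ∃ F, IsFacet (polyhedron M c) F ∧ y ∈ F ∧ x ∉ F := by
  obtain ⟨K, hK, hirr⟩ := exists_irredundant_subsystem (M := M) (c := c)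
  by_cases h : ∃ j ∈ K, (M *ᵥ y) j = c j ∧ (M *ᵥ x) j < c j
  · obtain ⟨j, hj, hyj, hxj⟩ := h
    obtain ⟨q, hq, hqj⟩ := hirr j hj
    exact ⟨_, isFacet_setOf_mulVec_eq hK hq hqj hx hxj hy hyj, ⟨hy, hyj⟩, fun h => hxj.ne h.2⟩
  -- otherwise `y + ε (y - x)` stays in the polyhedron, but it violates row `i`
  push Not at h
  have hdir : ∀ j ∈ K, (M *ᵥ y) j = c j → (M *ᵥ (y - x)) j ≤ 0 := fun j hj hyj => by
    rw [mulVec_sub, Pi.sub_apply]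
    linarith [h j hj hyj]
  obtain ⟨ε, hε, hε0⟩ :=
    ((eventually_forall_mulVec_add_smul_le (fun j _ => hy j) hdir).and self_mem_nhdsWithin).exists
  have hout := hK _ hε i
  rw [mulVec_add_smul_apply, mulVec_sub, Pi.sub_apply, hyi] at hout
  exact absurd hout (not_le.2 (lt_add_of_pos_right _ (mul_pos hε0 (sub_pos.2 hxi))))

lemma exists_mulVec_eq_and_pos_of_isMaxAug {z : Fin n → ℝ} {α : ℝ}
    (h : IsMaxAug (polyhedron M c) x z α) :
    ∃ i, (M *ᵥ (x + α • z)) i = c i ∧ 0 < (M *ᵥ z) i := by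
  obtain ⟨-, hy, hmax⟩ := h
  by_contra! htight
  obtain ⟨ε, hε, hε0⟩ :=
    ((eventually_forall_mulVec_add_smul_le (s := Finset.univ) (fun i _ => hy i)
      fun i _ => htight i).and self_mem_nhdsWithin).exists
  refine hmax ε hε0 fun i => ?_
  rw [add_smul, ← add_assoc]
  exact hε i (Finset.mem_univ i)

lemma omega1_le_of_isMaxAug {z : Fin n → ℝ} {α : ℝ}
    (hx : x ∈ Set.extremePoints ℝ (polyhedron M c)) (h : IsMaxAug (polyhedron M c) x z α) :
    omega1 (polyhedron M c) ≤ α * norm1 z := by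
  obtain ⟨i, hyi, hzi⟩ := exists_mulVec_eq_and_pos_of_isMaxAug h
  have hxi : (M *ᵥ x) i < c i := by
    rw [mulVec_add_smul_apply] at hyi
    nlinarith [h.1]
  obtain ⟨F, hF, hyF, hxF⟩ := exists_isFacet_mem_not_mem hx.1 h.2.1 hyi hxi
  calc omega1 (polyhedron M c) ≤ norm1 (x - (x + α • z)) := omega1_le_norm1_sub hx hF hxF hyF
    _ = α * norm1 z := by rw [norm1_sub_add_smul, abs_of_pos h.1]

end Fintype

end Polyhedron

theorem maximal_step_bounds_general
    (A : Matrix (Fin mA) (Fin n) ℤ) (B : Matrix (Fin mB) (Fin n) ℤ)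
    (b : Fin mA → ℤ) (d : Fin mB → ℤ)
    (hbdd : Bornology.IsBounded (Pset A B b d))
    (x : Fin n → ℝ) (hx : x ∈ Set.extremePoints ℝ (Pset A B b d)) :
    (∀ (z : Fin n → ℝ) (α : ℝ), norm1 z = 1 →
      (∃ ε : ℝ, 0 < ε ∧ x + ε • z ∈ Pset A B b d) →
      0 < α → x + α • z ∈ Pset A B b d →
      (∀ ε : ℝ, 0 < ε → x + (α + ε) • z ∉ Pset A B b d) →
      omega1 (Pset A B b d) ≤ α) ∧
    (∀ (zs : Fin n → ℝ) (αs : ℝ), norm1 zs = 1 →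
      0 < αs → x + αs • zs ∈ Pset A B b d →
      αs ≤ M1 (Pset A B b d)) := by
  rw [Pset_eq_polyhedron] at hbdd hx ⊢
  refine ⟨fun z α hz _ hα hy hmax => ?_, fun zs αs hzs hαs hy => ?_⟩
  · simpa only [hz, mul_one] using omega1_le_of_isMaxAug hx ⟨hα, hy, hmax⟩
  · have hcompact := Metric.isCompact_of_isClosed_isBounded isClosed_polyhedron hbdd
    have := norm1_sub_le_M1 hcompact convex_polyhedron hx.1 hy
    rwa [norm1_sub_add_smul, abs_of_pos hαs, hzs, mul_one] at this

/-- for a bounded polyhedron `P`, a maximal step from a vertex along a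
1-norm-unit direction has length at least `ω₁`, while any feasible step from the vertex
along a 1-norm-unit direction has length at most `M₁`. -/
theorem maximal_step_bounds
    (A : Matrix (Fin mA) (Fin n) ℤ) (B : Matrix (Fin mB) (Fin n) ℤ)
    (b : Fin mA → ℤ) (d : Fin mB → ℤ)
    (hmB : 1 ≤ mB)
    (hA : (rmat A).rank = mA)
    (hAB : (rmat (Matrix.fromRows A B)).rank = n)
    (hbdd : Bornology.IsBounded (Pset A B b d))
    (x : Fin n → ℝ) (hx : x ∈ Set.extremePoints ℝ (Pset A B b d)) :
    (∀ (z : Fin n → ℝ) (α : ℝ), norm1 z = 1 →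
      (∃ ε : ℝ, 0 < ε ∧ x + ε • z ∈ Pset A B b d) →
      0 < α → x + α • z ∈ Pset A B b d →
      (∀ ε : ℝ, 0 < ε → x + (α + ε) • z ∉ Pset A B b d) →
      omega1 (Pset A B b d) ≤ α) ∧
    (∀ (zs : Fin n → ℝ) (αs : ℝ), norm1 zs = 1 →
      0 < αs → x + αs • zs ∈ Pset A B b d →
      αs ≤ M1 (Pset A B b d)) :=
  maximal_step_bounds_general A B b d hbdd x hx
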